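/- arXiv:2311.03984 — 5 statements merged into one kernel-verified Lean document; each statement's English description precedes it below -/
import Mathlib

section
/- Let H be a predictable process and τ a stopping time. Define the process K by K(ω,t) = H(ω, τ(ω)) if τ(ω) < t (in particular τ(ω) < ∞), and K(ω,t) = 0 otherwise. Then K is predictable and locally bounded: there exists an increasing sequence of stopping times T_n ↑ ∞ such that each stopped process K^{T_n} is bounded. -/
/-!
Common framework: stochastic processes on predictable sets of interval type (PSITs),
following Yue–Wang–Huang, "Stochastic Integrals on Predictable Sets of Interval Type
with Financial Applications".

Time index: `ℝ≥0`.  Stopping times take values in `ℝ≥0∞`.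
A process is a map `Ω → ℝ≥0 → ℝ`.
-/

open MeasureTheory Set Filter Function
open scoped NNReal ENNReal Topology

noncomputable section

attribute [local instance] Classical.propDecidable

variable {Ω : Type*} [m : MeasurableSpace Ω]

/-- A stopping time with values in `[0,∞]` relative to the filtration `ℱ`:
`{T ≤ t} ∈ ℱ t` for every `t`. -/
def IsStopping (ℱ : Filtration ℝ≥0 m) (T : Ω → ℝ≥0∞) : Prop :=
  ∀ t : ℝ≥0, MeasurableSet[ℱ t] {ω | T ω ≤ (t : ℝ≥0∞)}

/-- The process `X` stopped at the (possibly infinite) random time `T`: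
`X^T (ω, t) = X (ω, T ω ⊓ t)`. -/
def stopped (X : Ω → ℝ≥0 → ℝ) (T : Ω → ℝ≥0∞) : Ω → ℝ≥0 → ℝ :=
  fun ω t => X ω (min (T ω) (t : ℝ≥0∞)).toNNReal

/-- An increasing sequence of stopping times with `T n ↑ ∞`. -/
def LocSeq (ℱ : Filtration ℝ≥0 m) (T : ℕ → Ω → ℝ≥0∞) : Prop :=
  (∀ n, IsStopping ℱ (T n)) ∧ (∀ ω, Monotone fun n => T n ω) ∧ ∀ ω, (⨆ n, T n ω) = ∞

/-- The usual conditions: the filtration is right-continuous and `ℱ 0` contains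
all `ℙ`-null sets. -/
def UsualConditions (ℙ : Measure Ω) (ℱ : Filtration ℝ≥0 m) : Prop :=
  (∀ t : ℝ≥0, (ℱ t : MeasurableSpace Ω) = ⨅ (s : ℝ≥0) (_ : t < s), (ℱ s : MeasurableSpace Ω)) ∧
    ∀ s : Set Ω, ℙ s = 0 → MeasurableSet[ℱ 0] s

/-- The predictable σ-field on `Ω × ℝ≥0`, generated by the sets `F × {0}` with
`F ∈ ℱ 0` and `F × (s, t]` with `F ∈ ℱ s`. -/
def predictableSigma (ℱ : Filtration ℝ≥0 m) : MeasurableSpace (Ω × ℝ≥0) :=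
  MeasurableSpace.generateFrom
    ({A | ∃ F : Set Ω, MeasurableSet[ℱ 0] F ∧ A = F ×ˢ ({0} : Set ℝ≥0)} ∪
      {A | ∃ (s t : ℝ≥0) (F : Set Ω), s < t ∧ MeasurableSet[ℱ s] F ∧ A = F ×ˢ Ioc s t})

/-- The class `𝒫` of predictable processes. -/
def classP (ℱ : Filtration ℝ≥0 m) : Set (Ω → ℝ≥0 → ℝ) :=
  {X | Measurable[predictableSigma ℱ] fun p : Ω × ℝ≥0 => X p.1 p.2}

/-- A set of interval type: every section is nonempty and of the form
`[0, T ω)` or `[0, T ω]`. -/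
def IsIntervalType (B : Set (Ω × ℝ≥0)) : Prop :=
  ∀ ω : Ω, {t : ℝ≥0 | (ω, t) ∈ B}.Nonempty ∧
    ∃ T : ℝ≥0∞, {t : ℝ≥0 | (ω, t) ∈ B} = {t : ℝ≥0 | (t : ℝ≥0∞) < T} ∨
      {t : ℝ≥0 | (ω, t) ∈ B} = {t : ℝ≥0 | (t : ℝ≥0∞) ≤ T}

/-- A predictable set of interval type (PSIT). -/
def IsPSIT (ℱ : Filtration ℝ≥0 m) (B : Set (Ω × ℝ≥0)) : Prop :=
  IsIntervalType B ∧ MeasurableSet[predictableSigma ℱ] B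

/-- The debut of the complement of `B`. -/
def debut (B : Set (Ω × ℝ≥0)) (ω : Ω) : ℝ≥0∞ :=
  ⨅ (t : ℝ≥0) (_ : (ω, t) ∉ B), (t : ℝ≥0∞)

/-- The stochastic interval `[0, T]`. -/
def Icc0 (T : Ω → ℝ≥0∞) : Set (Ω × ℝ≥0) :=
  {p : Ω × ℝ≥0 | (p.2 : ℝ≥0∞) ≤ T p.1}

/-- The extension `X·1_B` of a function on `B` by `0` off `B`. -/
def extend0 (B : Set (Ω × ℝ≥0)) (X : Ω → ℝ≥0 → ℝ) : Ω → ℝ≥0 → ℝ :=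
  fun ω t => if (ω, t) ∈ B then X ω t else 0

/-- A process: a family of random variables indexed by `ℝ≥0`. -/
def IsProcess (X : Ω → ℝ≥0 → ℝ) : Prop :=
  ∀ t : ℝ≥0, Measurable fun ω => X ω t

/-- A process on `B` : the extension by `0` off `B` is a process. -/
def IsProcessOn (B : Set (Ω × ℝ≥0)) (X : Ω → ℝ≥0 → ℝ) : Prop :=
  IsProcess (extend0 B X)

/-- Coupled sequence `(T n, Y n)` for the process `X` on `B`: the `T n` are increasing
stopping times with `T n ↑ debut B`, `⋃ n [0, T n] ⊇ B`, and `X = Y n` on `B ∩ [0, T n]`. -/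
structure IsCS (ℱ : Filtration ℝ≥0 m) (B : Set (Ω × ℝ≥0)) (X : Ω → ℝ≥0 → ℝ)
    (T : ℕ → Ω → ℝ≥0∞) (Y : ℕ → Ω → ℝ≥0 → ℝ) : Prop where
  stopping : ∀ n, IsStopping ℱ (T n)
  mono : ∀ ω, Monotone fun n => T n ω
  sup_eq : ∀ ω, (⨆ n, T n ω) = debut B ω
  covers : B ⊆ ⋃ n, Icc0 (T n)
  agrees : ∀ (n : ℕ) (ω : Ω) (t : ℝ≥0), (ω, t) ∈ B → (t : ℝ≥0∞) ≤ T n ω → X ω t = Y n ω t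

/-- `X ∈ 𝒟^B` : `X` admits a coupled sequence all of whose members lie in `𝒟`
(a fundamental coupled sequence, FCS). -/
def MemOn (ℱ : Filtration ℝ≥0 m) (𝒟 : Set (Ω → ℝ≥0 → ℝ)) (B : Set (Ω × ℝ≥0))
    (X : Ω → ℝ≥0 → ℝ) : Prop :=
  ∃ T Y, IsCS ℱ B X T Y ∧ ∀ n, Y n ∈ 𝒟

/-- A stopping time on `B` : a stopping time with `[0, S] ⊆ B`. -/
def IsStoppingOn (ℱ : Filtration ℝ≥0 m) (B : Set (Ω × ℝ≥0)) (S : Ω → ℝ≥0∞) : Prop :=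
  IsStopping ℱ S ∧ Icc0 S ⊆ B

/-- A fundamental sequence (FS) for `B` : an increasing sequence of stopping times with
`B = ⋃ n [0, τ n]`. -/
def IsFS (ℱ : Filtration ℝ≥0 m) (B : Set (Ω × ℝ≥0)) (τ : ℕ → Ω → ℝ≥0∞) : Prop :=
  (∀ n, IsStopping ℱ (τ n)) ∧ (∀ ω, Monotone fun n => τ n ω) ∧ B = ⋃ n, Icc0 (τ n)

/-- Stability of a class of processes under stopping. -/
def StableUnderStopping (ℱ : Filtration ℝ≥0 m) (𝒟 : Set (Ω → ℝ≥0 → ℝ)) : Prop :=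
  ∀ X ∈ 𝒟, ∀ T : Ω → ℝ≥0∞, IsStopping ℱ T → stopped X T ∈ 𝒟

/-- The localized class `𝒟_loc`. -/
def localized (ℱ : Filtration ℝ≥0 m) (𝒟 : Set (Ω → ℝ≥0 → ℝ)) : Set (Ω → ℝ≥0 → ℝ) :=
  {X | Measurable[ℱ 0] (fun ω => X ω 0) ∧
    ∃ T : ℕ → Ω → ℝ≥0∞, LocSeq ℱ T ∧
      ∀ n, (fun ω t => stopped X (T n) ω t - X ω 0) ∈ 𝒟}

/-- Stability of a class of processes under localization: `𝒟 = 𝒟_loc`. -/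
def StableUnderLocalization (ℱ : Filtration ℝ≥0 m) (𝒟 : Set (Ω → ℝ≥0 → ℝ)) : Prop :=
  localized ℱ 𝒟 = 𝒟

/-- A càdlàg function on `ℝ≥0` : right-continuous with finite left limits. -/
def IsCadlagFn (f : ℝ≥0 → ℝ) : Prop :=
  (∀ t, ContinuousWithinAt f (Ici t) t) ∧
    ∀ t : ℝ≥0, 0 < t → ∃ l : ℝ, Tendsto f (𝓝[<] t) (𝓝 l)

/-- The class `𝔐` of jointly measurable processes. -/
def classM : Set (Ω → ℝ≥0 → ℝ) :=
  {X | Measurable fun p : Ω × ℝ≥0 => X p.1 p.2}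

/-- The class `𝔐₀` of jointly measurable processes with null initial value. -/
def classM0 : Set (Ω → ℝ≥0 → ℝ) :=
  {X | X ∈ classM ∧ ∀ ω, X ω 0 = 0}

/-- The class `ℛ` of càdlàg processes. -/
def classR : Set (Ω → ℝ≥0 → ℝ) := {X : Ω → ℝ≥0 → ℝ | ∀ ω, IsCadlagFn (X ω)}

/-- The class `𝒞` of continuous processes. -/
def classC : Set (Ω → ℝ≥0 → ℝ) := {X : Ω → ℝ≥0 → ℝ | ∀ ω, Continuous (X ω)}

/-- Finite variation on every compact interval. -/
def FiniteVarFn (f : ℝ≥0 → ℝ) : Prop := ∀ t : ℝ≥0, BoundedVariationOn f (Iic t)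

/-- The class `𝔙` of càdlàg processes with paths of finite variation on compacts. -/
def classVraw : Set (Ω → ℝ≥0 → ℝ) :=
  {X : Ω → ℝ≥0 → ℝ | ∀ ω, IsCadlagFn (X ω) ∧ FiniteVarFn (X ω)}

/-- Adaptedness to the filtration `ℱ`. -/
def IsAdapted (ℱ : Filtration ℝ≥0 m) (X : Ω → ℝ≥0 → ℝ) : Prop :=
  ∀ t : ℝ≥0, Measurable[ℱ t] fun ω => X ω t

/-- The class `𝒱` of adapted càdlàg finite-variation processes. -/
def classV (ℱ : Filtration ℝ≥0 m) : Set (Ω → ℝ≥0 → ℝ) :=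
  {X | X ∈ classVraw ∧ IsAdapted ℱ X}

/-- The class `𝒱₀`. -/
def classV0 (ℱ : Filtration ℝ≥0 m) : Set (Ω → ℝ≥0 → ℝ) :=
  {X | X ∈ classV ℱ ∧ ∀ ω, X ω 0 = 0}

/-- Uniformly integrable martingale. -/
def IsUIMartingale (ℙ : Measure Ω) (ℱ : Filtration ℝ≥0 m) (X : Ω → ℝ≥0 → ℝ) : Prop :=
  Martingale (fun t ω => X ω t) ℱ ℙ ∧ UniformIntegrable (fun t ω => X ω t) 1 ℙ

/-- The class `ℳ_loc` of local martingales: càdlàg adapted processes `X` admitting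
stopping times `T n ↑ ∞` with each `X^{T n} − X₀` a uniformly integrable martingale. -/
def classMloc (ℙ : Measure Ω) (ℱ : Filtration ℝ≥0 m) : Set (Ω → ℝ≥0 → ℝ) :=
  {X | (∀ ω, IsCadlagFn (X ω)) ∧ IsAdapted ℱ X ∧
    ∃ T : ℕ → Ω → ℝ≥0∞, LocSeq ℱ T ∧
      ∀ n, IsUIMartingale ℙ ℱ fun ω t => stopped X (T n) ω t - X ω 0}

/-- The class `ℳ_{loc,0}`. -/
def classMloc0 (ℙ : Measure Ω) (ℱ : Filtration ℝ≥0 m) : Set (Ω → ℝ≥0 → ℝ) :=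
  {X | X ∈ classMloc ℙ ℱ ∧ ∀ ω, X ω 0 = 0}

/-- The class `𝒮` of semimartingales. -/
def classS (ℙ : Measure Ω) (ℱ : Filtration ℝ≥0 m) : Set (Ω → ℝ≥0 → ℝ) :=
  {X | ∃ M ∈ classMloc ℙ ℱ, ∃ A ∈ classV0 ℱ, X = fun ω t => M ω t + A ω t}

/-- The left limit of `f` at `t`, with the convention `f(0−) = f 0`. -/
def leftLimFn (f : ℝ≥0 → ℝ) (t : ℝ≥0) : ℝ :=
  if t = 0 then f 0 else limUnder (𝓝[<] t) f

/-- The left-limit process. -/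
def leftLimProc (X : Ω → ℝ≥0 → ℝ) : Ω → ℝ≥0 → ℝ := fun ω t => leftLimFn (X ω) t

/-- The jump process `ΔX = X − X₋`. -/
def jumpProc (X : Ω → ℝ≥0 → ℝ) : Ω → ℝ≥0 → ℝ := fun ω t => X ω t - leftLimFn (X ω) t

/-- The pre-stopped process `X^{T−} = X·1_{[0,T)} + X_{T−}·1_{[T,∞)}`. -/
def stoppedPre (X : Ω → ℝ≥0 → ℝ) (T : Ω → ℝ≥0∞) : Ω → ℝ≥0 → ℝ :=
  fun ω t => if (t : ℝ≥0∞) < T ω then X ω t else leftLimFn (X ω) (T ω).toNNReal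

/-- Indistinguishability on `B`. -/
def IndistOn (ℙ : Measure Ω) (B : Set (Ω × ℝ≥0)) (X Y : Ω → ℝ≥0 → ℝ) : Prop :=
  ∀ᵐ ω ∂ℙ, ∀ t : ℝ≥0, (ω, t) ∈ B → X ω t = Y ω t

/-- A locally bounded process: stopped at suitable `T n ↑ ∞` it is bounded. -/
def LocallyBounded (ℱ : Filtration ℝ≥0 m) (X : Ω → ℝ≥0 → ℝ) : Prop :=
  ∃ T : ℕ → Ω → ℝ≥0∞, LocSeq ℱ T ∧ ∀ n, ∃ C : ℝ, ∀ ω t, |stopped X (T n) ω t| ≤ C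

/-- The positive-variation function of a path (with an atom `a 0` at time `0`). -/
def posVarFn (a : ℝ≥0 → ℝ) (t : ℝ≥0) : ℝ :=
  max (a 0) 0 + ((eVariationOn a (Iic t)).toReal + a t - a 0) / 2

/-- The negative-variation function of a path (with an atom `a 0` at time `0`). -/
def negVarFn (a : ℝ≥0 → ℝ) (t : ℝ≥0) : ℝ :=
  max (-a 0) 0 + ((eVariationOn a (Iic t)).toReal - a t + a 0) / 2

/-- `(μp, μm)` are the Jordan components of the Lebesgue–Stieltjes measure `da` of the
path `a` (including an atom of mass `a 0` at `0`), characterized on the time set `s`. -/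
def IsLSPairOn (a : ℝ≥0 → ℝ) (μp μm : Measure ℝ≥0) (s : Set ℝ≥0) : Prop :=
  ∀ t ∈ s, μp (Iic t) = ENNReal.ofReal (posVarFn a t) ∧
    μm (Iic t) = ENNReal.ofReal (negVarFn a t)

/-- Pathwise Lebesgue–Stieltjes integrability: `∫_{[0,t]} |h| |da| < ∞` for all `t ∈ s`. -/
def LSIntegrablePathOn (h a : ℝ≥0 → ℝ) (s : Set ℝ≥0) : Prop :=
  ∃ μp μm : Measure ℝ≥0, IsLSPairOn a μp μm s ∧
    ∀ t ∈ s, (∫⁻ u in Iic t, ENNReal.ofReal |h u| ∂(μp + μm)) < ∞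

/-- `L` is the pathwise Lebesgue–Stieltjes integral `t ↦ ∫_{[0,t]} h da`, for `t ∈ s`. -/
def IsLSIntegralPathOn (h a : ℝ≥0 → ℝ) (s : Set ℝ≥0) (L : ℝ≥0 → ℝ) : Prop :=
  ∃ μp μm : Measure ℝ≥0, IsLSPairOn a μp μm s ∧
    ∀ t ∈ s, (∫⁻ u in Iic t, ENNReal.ofReal |h u| ∂(μp + μm)) < ∞ ∧
      L t = (∫ u in Iic t, h u ∂μp) - ∫ u in Iic t, h u ∂μm

/-- `H` is integrable on `B` with respect to `A` :
`∫_{[0,t]} |H_s(ω)| |dA_s(ω)| < ∞` for all `(ω, t) ∈ B`.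
(With `B = univ` this is classic Lebesgue–Stieltjes integrability.) -/
def LSIntegrableOn (B : Set (Ω × ℝ≥0)) (H A : Ω → ℝ≥0 → ℝ) : Prop :=
  ∀ ω, LSIntegrablePathOn (H ω) (A ω) {t : ℝ≥0 | (ω, t) ∈ B}

/-- `G = H • A`, the Lebesgue–Stieltjes integral on `B` of `H` with respect to `A` :
`G (ω, t) = ∫_{[0,t]} H_s(ω) dA_s(ω)` for `(ω, t) ∈ B`.
(With `B = univ` this is the classic Lebesgue–Stieltjes integral `H.A`.) -/
def IsLSIntegralOn (B : Set (Ω × ℝ≥0)) (H A G : Ω → ℝ≥0 → ℝ) : Prop :=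
  ∀ ω, IsLSIntegralPathOn (H ω) (A ω) {t : ℝ≥0 | (ω, t) ∈ B} (G ω)

/-- The patched process `x₀·1_{Ω×{0}} + Σ_{n} (Y n)·1_{(T (n-1), T n]}` (with `T (-1) = 0`). -/
def patch (T : ℕ → Ω → ℝ≥0∞) (Y : ℕ → Ω → ℝ≥0 → ℝ) (x0 : Ω → ℝ) : Ω → ℝ≥0 → ℝ :=
  fun ω t =>
    if t = 0 then x0 ω
    else ∑' n : ℕ,
      if (if n = 0 then (0 : ℝ≥0∞) else T (n - 1) ω) < (t : ℝ≥0∞) ∧ (t : ℝ≥0∞) ≤ T n ω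
        then Y n ω t else 0

/-- `V` is a quadratic covariation on `B` of the local martingales `M, N` on `B` :
`V ∈ 𝒱^B`, `MN − V ∈ (ℳ_{loc,0})^B` and `ΔV = ΔM·ΔN` on `B`. -/
def IsQuadCovarOn (ℙ : Measure Ω) (ℱ : Filtration ℝ≥0 m) (B : Set (Ω × ℝ≥0))
    (M N V : Ω → ℝ≥0 → ℝ) : Prop :=
  MemOn ℱ (classV ℱ) B V ∧
    MemOn ℱ (classMloc0 ℙ ℱ) B (fun ω t => M ω t * N ω t - V ω t) ∧
    IndistOn ℙ B (jumpProc V) fun ω t => jumpProc M ω t * jumpProc N ω t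

/-- `V` is a (classic) quadratic covariation of local martingales `M, N` :
`V ∈ 𝒱`, `MN − V ∈ ℳ_{loc,0}` and `ΔV = ΔM·ΔN`. -/
def IsQuadCovar (ℙ : Measure Ω) (ℱ : Filtration ℝ≥0 m) (M N V : Ω → ℝ≥0 → ℝ) : Prop :=
  V ∈ classV ℱ ∧ (fun ω t => M ω t * N ω t - V ω t) ∈ classMloc0 ℙ ℱ ∧
    ∀ᵐ ω ∂ℙ, ∀ t : ℝ≥0, jumpProc V ω t = jumpProc M ω t * jumpProc N ω t

/-- `H ∈ 𝓛_m(M)` : there is a local martingale `L` with `[L, N] = H.[M, N]`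
for every local martingale `N`. -/
def MemLm (ℙ : Measure Ω) (ℱ : Filtration ℝ≥0 m) (H M : Ω → ℝ≥0 → ℝ) : Prop :=
  ∃ L ∈ classMloc ℙ ℱ, ∀ N ∈ classMloc ℙ ℱ, ∀ V W : Ω → ℝ≥0 → ℝ,
    IsQuadCovar ℙ ℱ M N V → IsQuadCovar ℙ ℱ L N W →
      ∀ᵐ ω ∂ℙ, IsLSIntegralPathOn (H ω) (V ω) univ (W ω)

/-- `H ∈ 𝓛_m^B(M)` : there is a local martingale `L` on `B` with `[L, N] = H • [M, N]`
for every local martingale `N` on `B`. -/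
def MemLmOn (ℙ : Measure Ω) (ℱ : Filtration ℝ≥0 m) (B : Set (Ω × ℝ≥0))
    (H M : Ω → ℝ≥0 → ℝ) : Prop :=
  ∃ L, MemOn ℱ (classMloc ℙ ℱ) B L ∧
    ∀ N, MemOn ℱ (classMloc ℙ ℱ) B N → ∀ V W : Ω → ℝ≥0 → ℝ,
      IsQuadCovarOn ℙ ℱ B M N V → IsQuadCovarOn ℙ ℱ B L N W →
        ∀ᵐ ω ∂ℙ, IsLSIntegralPathOn (H ω) (V ω) {t : ℝ≥0 | (ω, t) ∈ B} (W ω)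

/-! Since `K = 1_{(τ,∞)} H^τ`, predictability of `K` reduces to that of the stopped process `H^τ`,
which holds because `(ω, t) ↦ (ω, τ ω ⊓ t)` is measurable for the predictable σ-field. For local
boundedness, stop at `τ` on the event `{|H_τ| > n}` and never elsewhere: `K` vanishes on `[0, τ]`,
and these are stopping times because `{H_τ ∈ B, τ ≤ t} ∈ ℱ t` for predictable `H`, which follows
from the measurability of the time-`t` section `ω ↦ (ω, t)` from `ℱ t` to the predictable σ-field. -/

namespace ENNReal

lemma coe_toNNReal_min_coe (a : ℝ≥0∞) (u : ℝ≥0) : ((min a u).toNNReal : ℝ≥0∞) = min a u :=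
  coe_toNNReal (min_lt_of_right_lt coe_lt_top).ne

end ENNReal

section Predictable

variable {ℱ : Filtration ℝ≥0 m}

lemma measurableSet_predictableSigma_prod_singleton_zero {F : Set Ω}
    (hF : MeasurableSet[ℱ 0] F) : MeasurableSet[predictableSigma ℱ] (F ×ˢ ({0} : Set ℝ≥0)) :=
  MeasurableSpace.measurableSet_generateFrom (Or.inl ⟨F, hF, rfl⟩)

lemma measurableSet_predictableSigma_prod_Ioc {F : Set Ω} {s t : ℝ≥0} (hst : s < t)
    (hF : MeasurableSet[ℱ s] F) : MeasurableSet[predictableSigma ℱ] (F ×ˢ Ioc s t) :=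
  MeasurableSpace.measurableSet_generateFrom (Or.inr ⟨s, t, F, hst, hF, rfl⟩)

lemma measurableSet_predictableSigma_prod_Ioi {F : Set Ω} {s : ℝ≥0}
    (hF : MeasurableSet[ℱ s] F) : MeasurableSet[predictableSigma ℱ] (F ×ˢ Ioi s) := by
  have hIoi : Ioi s = ⋃ n : ℕ, Ioc s (s + n + 1) := by
    ext u
    simp only [mem_Ioi, mem_iUnion, mem_Ioc]
    refine ⟨fun hsu => ?_, fun ⟨_, hsu, _⟩ => hsu⟩
    obtain ⟨n, hn⟩ := exists_nat_ge u
    exact ⟨n, hsu, hn.trans (le_add_self.trans le_self_add)⟩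
  rw [hIoi, prod_iUnion]
  exact .iUnion fun n => measurableSet_predictableSigma_prod_Ioc (by simp [add_assoc]) hF

lemma measurableSet_predictableSigma_prod_univ {F : Set Ω} (hF : MeasurableSet[ℱ 0] F) :
    MeasurableSet[predictableSigma ℱ] (F ×ˢ (univ : Set ℝ≥0)) := by
  rw [← Ici_bot, ← Ioi_insert, insert_eq, prod_union]
  exact (measurableSet_predictableSigma_prod_singleton_zero hF).union
    (measurableSet_predictableSigma_prod_Ioi hF)

lemma measurable_prodMk_right_predictableSigma (t : ℝ≥0) :
    Measurable[ℱ t, predictableSigma ℱ] fun ω : Ω => (ω, t) := by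
  refine @measurable_generateFrom _ _ (ℱ t) _ _ ?_
  rintro _ (⟨F, hF, rfl⟩ | ⟨r, s, F, hrs, hF, rfl⟩)
  · by_cases ht : t ∈ ({0} : Set ℝ≥0)
    · rw [mk_preimage_prod_left ht]; exact ℱ.mono zero_le _ hF
    · rw [mk_preimage_prod_left_eq_empty ht]; exact @MeasurableSet.empty _ (ℱ t)
  · by_cases ht : t ∈ Ioc r s
    · rw [mk_preimage_prod_left ht]; exact ℱ.mono ht.1.le _ hF
    · rw [mk_preimage_prod_left_eq_empty ht]; exact @MeasurableSet.empty _ (ℱ t)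

namespace IsStopping

variable {τ : Ω → ℝ≥0∞}

lemma measurableSet_predictableSigma_lt (hτ : IsStopping ℱ τ) :
    MeasurableSet[predictableSigma ℱ] {p : Ω × ℝ≥0 | τ p.1 < p.2} := by
  have h : {p : Ω × ℝ≥0 | τ p.1 < p.2} =
      ⋃ q : ℚ, {ω | τ ω ≤ ((q : ℝ).toNNReal : ℝ≥0∞)} ×ˢ Ioi (q : ℝ).toNNReal := by
    ext ⟨ω, u⟩
    simp only [mem_ofPred_eq, mem_iUnion, mem_prod, mem_Ioi]
    constructor
    · intro hτu
      obtain ⟨q, -, hτq, hqu⟩ := ENNReal.lt_iff_exists_rat_btwn.1 hτu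
      exact ⟨q, hτq.le, ENNReal.coe_lt_coe.1 hqu⟩
    · rintro ⟨q, hτq, hqu⟩
      exact hτq.trans_lt (ENNReal.coe_lt_coe.2 hqu)
  rw [h]
  exact .iUnion fun q => measurableSet_predictableSigma_prod_Ioi (hτ _)

lemma measurable_predictableSigma_stop (hτ : IsStopping ℱ τ) :
    Measurable[predictableSigma ℱ, predictableSigma ℱ]
      fun p : Ω × ℝ≥0 => (p.1, (min (τ p.1) p.2).toNNReal) := by
  refine @measurable_generateFrom _ _ (predictableSigma ℱ) _ _ ?_
  rintro _ (⟨F, hF, rfl⟩ | ⟨s, t, F, hst, hF, rfl⟩)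
  · have h : (fun p : Ω × ℝ≥0 => (p.1, (min (τ p.1) p.2).toNNReal)) ⁻¹' (F ×ˢ {0}) =
        (F ∩ {ω | τ ω ≤ (0 : ℝ≥0)}) ×ˢ univ ∪ F ×ˢ {0} := by
      ext ⟨ω, u⟩
      simp only [mem_preimage, mem_prod, mem_singleton_iff, mem_union, mem_inter_iff,
        mem_ofPred_eq, mem_univ, and_true, ← ENNReal.coe_inj, ENNReal.coe_toNNReal_min_coe,
        ENNReal.coe_zero, nonpos_iff_eq_zero]
      rw [← bot_eq_zero, min_eq_bot]
      tauto
    rw [h]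
    exact (measurableSet_predictableSigma_prod_univ (hF.inter (hτ 0))).union
      (measurableSet_predictableSigma_prod_singleton_zero hF)
  · have h : (fun p : Ω × ℝ≥0 => (p.1, (min (τ p.1) p.2).toNNReal)) ⁻¹' (F ×ˢ Ioc s t) =
        (F \ {ω | τ ω ≤ s}) ×ˢ Ioc s t ∪ ((F ∩ {ω | τ ω ≤ t}) \ {ω | τ ω ≤ s}) ×ˢ Ioi t := by
      ext ⟨ω, u⟩
      simp only [mem_preimage, mem_prod, mem_Ioc, mem_union, Set.mem_sdiff, mem_inter_iff,
        mem_ofPred_eq, mem_Ioi, not_le, ← ENNReal.coe_lt_coe, ← ENNReal.coe_le_coe,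
        ENNReal.coe_toNNReal_min_coe, lt_min_iff, min_le_iff]
      rcases le_or_gt (u : ℝ≥0∞) t with hut | htu
      · have := hut.not_gt
        tauto
      · have := htu.not_ge
        have := (ENNReal.coe_lt_coe.2 hst).trans htu
        tauto
    rw [h]
    exact (measurableSet_predictableSigma_prod_Ioc hst (hF.diff (hτ s))).union
      (measurableSet_predictableSigma_prod_Ioi
        (((ℱ.mono hst.le _ hF).inter (hτ t)).diff (ℱ.mono hst.le _ (hτ s))))

lemma stopped_mem_classP (hτ : IsStopping ℱ τ) {H : Ω → ℝ≥0 → ℝ} (hH : H ∈ classP ℱ) :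
    stopped H τ ∈ classP ℱ :=
  hH.comp hτ.measurable_predictableSigma_stop

lemma measurableSet_mem_and_le (hτ : IsStopping ℱ τ) {A : Set (Ω × ℝ≥0)}
    (hA : MeasurableSet[predictableSigma ℱ] A) (t : ℝ≥0) :
    MeasurableSet[ℱ t] {ω | (ω, (τ ω).toNNReal) ∈ A ∧ τ ω ≤ t} := by
  have h : {ω | (ω, (τ ω).toNNReal) ∈ A ∧ τ ω ≤ t} =
      (fun ω => (ω, (min (τ ω) t).toNNReal)) ⁻¹' A ∩ {ω | τ ω ≤ t} := by
    ext ω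
    simp only [mem_ofPred_eq, mem_inter_iff, mem_preimage]
    exact ⟨fun ⟨hA, hτt⟩ => ⟨by rwa [min_eq_left hτt], hτt⟩,
      fun ⟨hA, hτt⟩ => ⟨by rwa [min_eq_left hτt] at hA, hτt⟩⟩
  rw [h]
  exact (hτ.measurable_predictableSigma_stop.comp
    (measurable_prodMk_right_predictableSigma t) hA).inter (hτ t)

end IsStopping

end Predictable

def frozenAfter (H : Ω → ℝ≥0 → ℝ) (τ : Ω → ℝ≥0∞) : Ω → ℝ≥0 → ℝ :=
  fun ω t => if τ ω < (t : ℝ≥0∞) then H ω (τ ω).toNNReal else 0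

def exceedTime (H : Ω → ℝ≥0 → ℝ) (τ : Ω → ℝ≥0∞) (n : ℕ) : Ω → ℝ≥0∞ :=
  fun ω => if (n : ℝ) < |H ω (τ ω).toNNReal| then τ ω else ∞

section FrozenAfter

variable {ℱ : Filtration ℝ≥0 m} {H : Ω → ℝ≥0 → ℝ} {τ : Ω → ℝ≥0∞}

lemma frozenAfter_mem_classP (hH : H ∈ classP ℱ) (hτ : IsStopping ℱ τ) :
    frozenAfter H τ ∈ classP ℱ := by
  have h : (fun p : Ω × ℝ≥0 => frozenAfter H τ p.1 p.2) =
      {p : Ω × ℝ≥0 | τ p.1 < p.2}.indicator fun p => stopped H τ p.1 p.2 := by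
    ext ⟨ω, t⟩
    simp only [frozenAfter, stopped, indicator, mem_ofPred_eq]
    split_ifs with hτt
    · rw [min_eq_left hτt.le]
    · rfl
  change Measurable[predictableSigma ℱ] fun p : Ω × ℝ≥0 => frozenAfter H τ p.1 p.2
  rw [h]
  exact (hτ.stopped_mem_classP hH).indicator hτ.measurableSet_predictableSigma_lt

omit m in
lemma frozenAfter_eq_zero_of_le {ω : Ω} {t : ℝ≥0} (ht : (t : ℝ≥0∞) ≤ τ ω) :
    frozenAfter H τ ω t = 0 :=
  if_neg ht.not_gt

omit m in
lemma abs_frozenAfter_le (ω : Ω) (t : ℝ≥0) :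
    |frozenAfter H τ ω t| ≤ |H ω (τ ω).toNNReal| := by
  unfold frozenAfter
  split_ifs <;> simp

lemma locSeq_exceedTime (hH : H ∈ classP ℱ) (hτ : IsStopping ℱ τ) :
    LocSeq ℱ (exceedTime H τ) := by
  refine ⟨fun n t => ?_, fun ω n k hnk => ?_, fun ω => ?_⟩
  · have hA : MeasurableSet[predictableSigma ℱ] {p : Ω × ℝ≥0 | (n : ℝ) < |H p.1 p.2|} :=
      measurable_abs.comp hH measurableSet_Ioi
    convert hτ.measurableSet_mem_and_le hA t using 1
    ext ω
    simp only [exceedTime, mem_ofPred_eq]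
    split_ifs with hn <;> simp [hn]
  · simp only [exceedTime]
    by_cases hk : (k : ℝ) < |H ω (τ ω).toNNReal|
    · rw [if_pos ((Nat.cast_le.2 hnk).trans_lt hk), if_pos hk]
    · rw [if_neg hk]
      exact le_top
  · obtain ⟨n, hn⟩ := exists_nat_ge |H ω (τ ω).toNNReal|
    refine top_unique (le_iSup_of_le n ?_)
    simp [exceedTime, hn.not_gt]

omit m in
lemma abs_stopped_frozenAfter_exceedTime_le (n : ℕ) (ω : Ω) (t : ℝ≥0) :
    |stopped (frozenAfter H τ) (exceedTime H τ n) ω t| ≤ n := by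
  unfold stopped
  by_cases hn : (n : ℝ) < |H ω (τ ω).toNNReal|
  · rw [frozenAfter_eq_zero_of_le]
    · simp
    · simp only [exceedTime, if_pos hn, ENNReal.coe_toNNReal_min_coe, min_le_left]
  · exact (abs_frozenAfter_le ω _).trans (not_lt.1 hn)

lemma locallyBounded_frozenAfter (hH : H ∈ classP ℱ) (hτ : IsStopping ℱ τ) :
    LocallyBounded ℱ (frozenAfter H τ) :=
  ⟨exceedTime H τ, locSeq_exceedTime hH hτ,
    fun n => ⟨n, abs_stopped_frozenAfter_exceedTime_le n⟩⟩

end FrozenAfter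

theorem statement2_general (ℱ : Filtration ℝ≥0 m) (H : Ω → ℝ≥0 → ℝ) (hH : H ∈ classP ℱ)
    (τ : Ω → ℝ≥0∞) (hτ : IsStopping ℱ τ) :
    (fun (ω : Ω) (t : ℝ≥0) =>
        if τ ω < (t : ℝ≥0∞) then H ω (τ ω).toNNReal else 0) ∈ classP ℱ ∧
      LocallyBounded ℱ fun (ω : Ω) (t : ℝ≥0) =>
        if τ ω < (t : ℝ≥0∞) then H ω (τ ω).toNNReal else 0 :=
  ⟨frozenAfter_mem_classP hH hτ, locallyBounded_frozenAfter hH hτ⟩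

/-- For a predictable `H` and a stopping time `τ`, the process
`K (ω, t) = H (ω, τ ω)` if `τ ω < t` and `0` otherwise is predictable and
locally bounded. -/
theorem statement2 (ℙ : Measure Ω) [IsProbabilityMeasure ℙ] (ℱ : Filtration ℝ≥0 m)
    (hUC : UsualConditions ℙ ℱ) (H : Ω → ℝ≥0 → ℝ) (hH : H ∈ classP ℱ)
    (τ : Ω → ℝ≥0∞) (hτ : IsStopping ℱ τ) :
    (fun (ω : Ω) (t : ℝ≥0) =>
        if τ ω < (t : ℝ≥0∞) then H ω (τ ω).toNNReal else 0) ∈ classP ℱ ∧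
      LocallyBounded ℱ fun (ω : Ω) (t : ℝ≥0) =>
        if τ ω < (t : ℝ≥0∞) then H ω (τ ω).toNNReal else 0 :=
  statement2_general ℱ H hH τ hτ

end
end

section
/- Let B be a PSIT, 𝒟 a class of processes that is stable under stopping and stable under localization, X ∈ 𝒟^B with FCS (T_n, X^{(n)}), and S a stopping time on B. Then the stopped process X^S belongs to 𝒟, and (T_n, (X^{(n)})^S) is an FCS in 𝒟 for the restriction X^S𝔍_B ∈ 𝒟^B. -/
/-!
Common framework: stochastic processes on predictable sets of interval type (PSITs),
following Yue–Wang–Huang, "Stochastic Integrals on Predictable Sets of Interval Type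
with Financial Applications".

Time index: `ℝ≥0`.  Stopping times take values in `ℝ≥0∞`.
A process is a map `Ω → ℝ≥0 → ℝ`.
-/

open MeasureTheory Set Filter Function
open scoped NNReal ENNReal Topology

noncomputable section

attribute [local instance] Classical.propDecidable

variable {Ω : Type*} [m : MeasurableSpace Ω]

end

/-!
Since `[0, S] ⊆ B`, the process `X` is only ever evaluated on `B` by `X^S`, so `X^S` agrees
with `(Y n)^S` wherever `t ≤ T n`. To localize, stop at `T n` restricted to `{T n < S}`: these
times increase to `∞` because the point `(ω, S ω)` of `B` is eventually covered by `[0, T n]`,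
and `X^S` stopped at them is `(Y n)^S` stopped at `T n`, which lies in `𝒟`.
-/

section StoppingOnB

variable {Ω : Type*}

theorem coe_toNNReal_min_coe (a : ℝ≥0∞) (t : ℝ≥0) :
    (((min a (t : ℝ≥0∞)).toNNReal : ℝ≥0) : ℝ≥0∞) = min a t :=
  ENNReal.coe_toNNReal (ne_top_of_le_ne_top ENNReal.coe_ne_top (min_le_right _ _))

@[simp]
theorem stopped_apply_zero (X : Ω → ℝ≥0 → ℝ) (S : Ω → ℝ≥0∞) (ω : Ω) :
    stopped X S ω 0 = X ω 0 := by
  simp [stopped]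

theorem stopped_stopped (X : Ω → ℝ≥0 → ℝ) (S R : Ω → ℝ≥0∞) :
    stopped (stopped X S) R = stopped X fun ω => min (S ω) (R ω) := by
  funext ω t
  simp only [stopped, coe_toNNReal_min_coe, min_assoc]

theorem Icc0_min_subset_left (S R : Ω → ℝ≥0∞) : Icc0 (fun ω => min (S ω) (R ω)) ⊆ Icc0 S :=
  fun _ hp => le_trans (α := ℝ≥0∞) hp (min_le_left _ _)

/-- The restriction `T_{T < S}` of `T` to the event `{T < S}`. -/
noncomputable def restrictLT (T S : Ω → ℝ≥0∞) : Ω → ℝ≥0∞ :=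
  fun ω => if S ω ≤ T ω then ∞ else T ω

theorem restrictLT_mono {T T' S : Ω → ℝ≥0∞} {ω : Ω} (h : T ω ≤ T' ω) :
    restrictLT T S ω ≤ restrictLT T' S ω := by
  unfold restrictLT
  split_ifs with h₁ h₂ h₂
  exacts [le_rfl, absurd (h₁.trans h) h₂, le_top, h]

theorem min_restrictLT (T S : Ω → ℝ≥0∞) (ω : Ω) :
    min (S ω) (restrictLT T S ω) = min (S ω) (T ω) := by
  unfold restrictLT
  split_ifs with h
  · rw [min_top_right, min_eq_left h]
  · rfl

variable {m : MeasurableSpace Ω} {ℱ : Filtration ℝ≥0 m}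

theorem IsStopping.isStoppingTime {T : Ω → ℝ≥0∞} (hT : IsStopping ℱ T) :
    IsStoppingTime ℱ T :=
  hT

theorem isStopping_restrictLT {T S : Ω → ℝ≥0∞} (hT : IsStopping ℱ T) (hS : IsStopping ℱ S) :
    IsStopping ℱ (restrictLT T S) := by
  intro t
  have hset : {ω | restrictLT T S ω ≤ t} = {ω | S ω ≤ T ω}ᶜ ∩ {ω | T ω ≤ t} := by
    ext ω
    by_cases h : S ω ≤ T ω <;> simp [restrictLT, h]
  rw [hset]
  exact (hS.isStoppingTime.measurableSet_stopping_time_le hT.isStoppingTime).compl.2 t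

section Localization

variable {𝒟 : Set (Ω → ℝ≥0 → ℝ)} {W : Ω → ℝ≥0 → ℝ}

theorem StableUnderLocalization.measurable_initial (hDl : StableUnderLocalization ℱ 𝒟)
    (hW : W ∈ 𝒟) : Measurable[ℱ 0] fun ω => W ω 0 := by
  rw [← hDl] at hW
  exact hW.1

theorem StableUnderLocalization.sub_initial_mem (hDl : StableUnderLocalization ℱ 𝒟)
    (hW : W ∈ 𝒟) : (fun ω t => W ω t - W ω 0) ∈ 𝒟 := by
  rw [← hDl] at hW ⊢
  obtain ⟨-, τ, hτ, hmem⟩ := hW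
  refine ⟨by simp, τ, hτ, fun n => ?_⟩
  simpa [stopped] using hmem n

theorem StableUnderLocalization.mem_of_stopped_mem (hDl : StableUnderLocalization ℱ 𝒟)
    {τ : ℕ → Ω → ℝ≥0∞} (h0 : Measurable[ℱ 0] fun ω => W ω 0) (hτ : LocSeq ℱ τ)
    (hmem : ∀ n, stopped W (τ n) ∈ 𝒟) : W ∈ 𝒟 := by
  rw [← hDl]
  refine ⟨h0, τ, hτ, fun n => ?_⟩
  simpa using hDl.sub_initial_mem (hmem n)

end Localization

section CoupledSequence

variable {B : Set (Ω × ℝ≥0)} {X : Ω → ℝ≥0 → ℝ} {T : ℕ → Ω → ℝ≥0∞}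
  {Y : ℕ → Ω → ℝ≥0 → ℝ} {S : Ω → ℝ≥0∞}

theorem IsCS.stopped_apply_eq (hCS : IsCS ℱ B X T Y) (hSB : Icc0 S ⊆ B) {n : ℕ} {ω : Ω}
    {t : ℝ≥0} (ht : min (S ω) t ≤ T n ω) : stopped X S ω t = stopped (Y n) S ω t := by
  refine hCS.agrees n ω _ (hSB ?_) ?_ <;>
    simp only [Icc0, mem_ofPred_eq, coe_toNNReal_min_coe, min_le_left, ht]

theorem IsCS.iSup_restrictLT_eq_top (hCS : IsCS ℱ B X T Y) (hSB : Icc0 S ⊆ B) (ω : Ω) :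
    ⨆ n, restrictLT (T n) S ω = ∞ := by
  by_cases hreach : ∃ n, S ω ≤ T n ω
  · obtain ⟨n, hn⟩ := hreach
    exact top_unique (le_iSup_of_le n (by simp [restrictLT, hn]))
  simp only [not_exists, not_le] at hreach
  -- `(ω, S ω) ∈ B` is covered by some `[0, T n]`, so `S ω` escapes every `T n ω` only by
  -- being infinite, and then the section of `B` at `ω` is all of `ℝ≥0`.
  obtain hS | hS := eq_or_ne (S ω) ∞
  · have hdebut : debut B ω = ∞ := by
      simp [debut, fun t : ℝ≥0 => hSB (show (ω, t) ∈ Icc0 S by simp [Icc0, hS])]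
    simp_rw [restrictLT, (hreach _).not_ge, if_false]
    rw [hCS.sup_eq, hdebut]
  · obtain ⟨n, hn⟩ := mem_iUnion.1 (hCS.covers (hSB (show (ω, (S ω).toNNReal) ∈ Icc0 S by
      simp [Icc0, ENNReal.coe_toNNReal hS])))
    simp only [Icc0, mem_ofPred_eq, ENNReal.coe_toNNReal hS] at hn
    exact absurd hn (hreach n).not_ge

theorem IsCS.locSeq_restrictLT (hCS : IsCS ℱ B X T Y) (hS : IsStopping ℱ S)
    (hSB : Icc0 S ⊆ B) : LocSeq ℱ fun n => restrictLT (T n) S :=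
  ⟨fun n => isStopping_restrictLT (hCS.stopping n) hS,
    fun ω _ _ hnk => restrictLT_mono (hCS.mono ω hnk), hCS.iSup_restrictLT_eq_top hSB⟩

theorem IsCS.stopped_stopped_restrictLT (hCS : IsCS ℱ B X T Y) (hSB : Icc0 S ⊆ B) (n : ℕ) :
    stopped (stopped X S) (restrictLT (T n) S) = stopped (stopped (Y n) S) (T n) := by
  simp only [stopped_stopped, min_restrictLT]
  funext ω t
  exact hCS.stopped_apply_eq ((Icc0_min_subset_left S (T n)).trans hSB)
    ((min_le_left _ _).trans (min_le_right _ _))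

theorem IsCS.stopped (hCS : IsCS ℱ B X T Y) (hSB : Icc0 S ⊆ B) :
    IsCS ℱ B (stopped X S) T fun n => stopped (Y n) S :=
  { hCS with
    agrees := fun _ _ _ _ ht => hCS.stopped_apply_eq hSB ((min_le_right _ _).trans ht) }

end CoupledSequence

end StoppingOnB

variable {Ω : Type*} [m : MeasurableSpace Ω]

theorem statement4_general (ℱ : Filtration ℝ≥0 m)
    (B : Set (Ω × ℝ≥0))
    (𝒟 : Set (Ω → ℝ≥0 → ℝ)) (hDs : StableUnderStopping ℱ 𝒟)
    (hDl : StableUnderLocalization ℱ 𝒟)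
    (X : Ω → ℝ≥0 → ℝ) (T : ℕ → Ω → ℝ≥0∞) (Y : ℕ → Ω → ℝ≥0 → ℝ)
    (hCS : IsCS ℱ B X T Y) (hY : ∀ n, Y n ∈ 𝒟)
    (S : Ω → ℝ≥0∞) (hS : IsStoppingOn ℱ B S) :
    stopped X S ∈ 𝒟 ∧
      IsCS ℱ B (stopped X S) T (fun n => stopped (Y n) S) ∧
      ∀ n, stopped (Y n) S ∈ 𝒟 := by
  obtain ⟨hSst, hSB⟩ := hS
  have hYS : ∀ n, stopped (Y n) S ∈ 𝒟 := fun n => hDs _ (hY n) S hSst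
  have hCSS := hCS.stopped hSB
  refine ⟨?_, hCSS, hYS⟩
  have hinitial : (fun ω => stopped X S ω 0) = fun ω => stopped (Y 0) S ω 0 :=
    funext fun ω => hCSS.agrees 0 ω 0 (hSB (by simp [Icc0])) (by simp)
  refine hDl.mem_of_stopped_mem (hinitial ▸ hDl.measurable_initial (hYS 0))
    (hCS.locSeq_restrictLT hSst hSB) fun n => ?_
  rw [hCS.stopped_stopped_restrictLT hSB n]
  exact hDs _ (hYS n) _ (hCS.stopping n)

/-- If `𝒟` is stable under stopping and localization, `X ∈ 𝒟^B` with
FCS `(T n, Y n)` and `S` is a stopping time on `B`, then `X^S ∈ 𝒟` and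
`(T n, (Y n)^S)` is an FCS in `𝒟` for `X^S 𝔍_B ∈ 𝒟^B`. -/
theorem statement4 (ℙ : Measure Ω) [IsProbabilityMeasure ℙ] (ℱ : Filtration ℝ≥0 m)
    (hUC : UsualConditions ℙ ℱ) (B : Set (Ω × ℝ≥0)) (hB : IsPSIT ℱ B)
    (𝒟 : Set (Ω → ℝ≥0 → ℝ)) (hDs : StableUnderStopping ℱ 𝒟)
    (hDl : StableUnderLocalization ℱ 𝒟)
    (X : Ω → ℝ≥0 → ℝ) (T : ℕ → Ω → ℝ≥0∞) (Y : ℕ → Ω → ℝ≥0 → ℝ)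
    (hCS : IsCS ℱ B X T Y) (hY : ∀ n, Y n ∈ 𝒟)
    (S : Ω → ℝ≥0∞) (hS : IsStoppingOn ℱ B S) :
    stopped X S ∈ 𝒟 ∧
      IsCS ℱ B (stopped X S) T (fun n => stopped (Y n) S) ∧
      ∀ n, stopped (Y n) S ∈ 𝒟 :=
  statement4_general ℱ B 𝒟 hDs hDl X T Y hCS hY S hS
end

section
/- Let B be a PSIT, (τ_n) a fundamental sequence for B, 𝒟 a class of processes that is stable under stopping and stable under localization, and X ∈ 𝒟^B. Then (τ_n, X^{τ_n}) is an FCS in 𝒟 for X; in particular X^{τ_n} ∈ 𝒟 for every n. -/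
/-!
Common framework: stochastic processes on predictable sets of interval type (PSITs),
following Yue–Wang–Huang, "Stochastic Integrals on Predictable Sets of Interval Type
with Financial Applications".

Time index: `ℝ≥0`.  Stopping times take values in `ℝ≥0∞`.
A process is a map `Ω → ℝ≥0 → ℝ`.
-/

open MeasureTheory Set Filter Function
open scoped NNReal ENNReal Topology

noncomputable section

attribute [local instance] Classical.propDecidable

variable {Ω : Type*} [m : MeasurableSpace Ω]

/-- For stopping times `σ, τ`, the set `{τ ≤ σ} ∩ {σ ≤ t}` is `ℱ t`-measurable. -/
lemma aux_le_stopping (ℱ : Filtration ℝ≥0 m) {σ τ : Ω → ℝ≥0∞}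
    (hσ : IsStopping ℱ σ) (hτ : IsStopping ℱ τ) (t : ℝ≥0) :
    MeasurableSet[ℱ t] {ω | τ ω ≤ σ ω ∧ σ ω ≤ (t : ℝ≥0∞)} := by
  have heq : {ω | τ ω ≤ σ ω ∧ σ ω ≤ (t : ℝ≥0∞)} =
      ({ω | σ ω ≤ (t : ℝ≥0∞)} ∩ {ω | τ ω ≤ (t : ℝ≥0∞)}) ∩
      ⋂ (q : ℚ) (_ : Real.toNNReal q ≤ t),
        ({ω | σ ω ≤ ((Real.toNNReal q : ℝ≥0) : ℝ≥0∞)}ᶜ ∪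
          {ω | τ ω ≤ ((Real.toNNReal q : ℝ≥0) : ℝ≥0∞)}) := by
    ext ω
    constructor
    · rintro ⟨h1, h2⟩
      refine ⟨⟨h2, h1.trans h2⟩, ?_⟩
      refine mem_iInter.mpr fun q => mem_iInter.mpr fun hq => ?_
      by_cases hσq : σ ω ≤ ((Real.toNNReal q : ℝ≥0) : ℝ≥0∞)
      · exact Or.inr (h1.trans hσq)
      · exact Or.inl hσq
    · rintro ⟨⟨hσt, hτt⟩, hq⟩
      refine ⟨?_, hσt⟩
      by_contra hlt
      push_neg at hlt
      obtain ⟨q, _, hq1, hq2⟩ := ENNReal.lt_iff_exists_rat_btwn.mp hlt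
      have hqt : Real.toNNReal q ≤ t := by
        have h3 : ((Real.toNNReal q : ℝ≥0) : ℝ≥0∞) < (t : ℝ≥0∞) := hq2.trans_le hτt
        exact_mod_cast h3.le
      rcases mem_iInter.mp (mem_iInter.mp hq q) hqt with h | h
      · exact h hq1.le
      · exact absurd hq2 (not_lt.mpr h)
  rw [heq]
  refine ((hσ t).inter (hτ t)).inter ?_
  refine MeasurableSet.iInter fun q => MeasurableSet.iInter fun hq => ?_
  exact ((ℱ.mono hq _ (hσ _)).compl).union (ℱ.mono hq _ (hτ _))

/-- Stopping twice amounts to stopping at the minimum. -/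
lemma aux_stopped_stopped (X : Ω → ℝ≥0 → ℝ) (R S : Ω → ℝ≥0∞) :
    stopped (stopped X R) S = stopped X (fun ω => min (R ω) (S ω)) := by
  funext ω t
  have hfin : min (S ω) ((t : ℝ≥0) : ℝ≥0∞) ≠ ∞ :=
    ne_top_of_le_ne_top ENNReal.coe_ne_top (min_le_right _ _)
  simp only [stopped]
  rw [ENNReal.coe_toNNReal hfin, ← min_assoc]

/-- If `𝒟` is stable under localization and `Z ∈ 𝒟`, then `Z − Z₀ ∈ 𝒟`. -/
lemma aux_sub_initial {ℱ : Filtration ℝ≥0 m} {𝒟 : Set (Ω → ℝ≥0 → ℝ)}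
    (hDl : StableUnderLocalization ℱ 𝒟) {Z : Ω → ℝ≥0 → ℝ} (hZ : Z ∈ 𝒟) :
    (fun ω t => Z ω t - Z ω 0) ∈ 𝒟 := by
  rw [← hDl] at hZ ⊢
  obtain ⟨hmeas, R, hR, hmem⟩ := hZ
  refine ⟨by simpa using measurable_const, R, hR, fun j => ?_⟩
  have hfun : (fun ω t => stopped (fun ω t => Z ω t - Z ω 0) (R j) ω t -
      (fun ω t => Z ω t - Z ω 0) ω 0) = fun ω t => stopped Z (R j) ω t - Z ω 0 := by
    funext ω t
    simp [stopped]
  rw [hfun]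
  exact hmem j

/-- If `(τ n)` is a fundamental sequence for `B`, `𝒟` is stable under
stopping and localization, and `X ∈ 𝒟^B`, then `(τ n, X^{τ n})` is an FCS in `𝒟`
for `X`; in particular `X^{τ n} ∈ 𝒟` for every `n`. -/
theorem statement5 (ℙ : Measure Ω) [IsProbabilityMeasure ℙ] (ℱ : Filtration ℝ≥0 m)
    (hUC : UsualConditions ℙ ℱ) (B : Set (Ω × ℝ≥0)) (hB : IsPSIT ℱ B)
    (τ : ℕ → Ω → ℝ≥0∞) (hτ : IsFS ℱ B τ)
    (𝒟 : Set (Ω → ℝ≥0 → ℝ)) (hDs : StableUnderStopping ℱ 𝒟)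
    (hDl : StableUnderLocalization ℱ 𝒟)
    (X : Ω → ℝ≥0 → ℝ) (hX : MemOn ℱ 𝒟 B X) :
    IsCS ℱ B X τ (fun n => stopped X (τ n)) ∧ ∀ n, stopped X (τ n) ∈ 𝒟 := by
  obtain ⟨T, Y, hCS, hY⟩ := hX
  obtain ⟨hτst, hτmono, hτB⟩ := hτ
  -- basic membership facts
  have hIccB : ∀ n, Icc0 (τ n) ⊆ B := fun n => by
    rw [hτB]; exact subset_iUnion (fun k => Icc0 (τ k)) n
  have hB0 : ∀ ω, (ω, (0 : ℝ≥0)) ∈ B := fun ω =>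
    hIccB 0 (by simp [Icc0])
  -- the supremum of the fundamental sequence is the debut
  have hsup : ∀ ω, (⨆ k, τ k ω) = debut B ω := by
    intro ω
    apply le_antisymm
    · refine iSup_le fun k => le_iInf fun t => le_iInf fun ht => ?_
      by_contra hlt
      push_neg at hlt
      exact ht (by rw [hτB]; exact mem_iUnion.mpr ⟨k, hlt.le⟩)
    · by_contra hlt
      push_neg at hlt
      obtain ⟨t, h1, h2⟩ := ENNReal.lt_iff_exists_nnreal_btwn.mp hlt
      have hnot : (ω, t) ∉ B := by
        intro hmem
        rw [hτB] at hmem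
        obtain ⟨k, hk⟩ := mem_iUnion.mp hmem
        exact absurd ((hk : ((t : ℝ≥0∞) ≤ τ k ω)).trans (le_iSup (fun j => τ j ω) k)) h1.not_ge
      exact absurd h2 (not_lt.mpr (iInf_le_of_le t (iInf_le _ hnot)))
  -- the coupled-sequence part
  have hagrees : ∀ (k : ℕ) (ω : Ω) (t : ℝ≥0), (ω, t) ∈ B → (t : ℝ≥0∞) ≤ τ k ω →
      X ω t = stopped X (τ k) ω t := by
    intro k ω t _ ht
    simp [stopped, min_eq_right ht]
  have hcs : IsCS ℱ B X τ (fun n => stopped X (τ n)) :=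
    ⟨hτst, hτmono, hsup, by rw [hτB], hagrees⟩
  refine ⟨hcs, fun n => ?_⟩
  -- initial values agree
  have hXY0 : ∀ (k : ℕ) (ω : Ω), X ω 0 = Y k ω 0 := fun k ω =>
    hCS.agrees k ω 0 (hB0 ω) (by simp)
  -- the localizing sequence
  set S : ℕ → Ω → ℝ≥0∞ := fun k ω => if τ n ω ≤ T k ω then ∞ else T k ω with hS
  have hSst : ∀ k, IsStopping ℱ (S k) := by
    intro k t
    have heq : {ω | S k ω ≤ (t : ℝ≥0∞)} =
        {ω | T k ω ≤ (t : ℝ≥0∞)} ∩ {ω | τ n ω ≤ T k ω ∧ T k ω ≤ (t : ℝ≥0∞)}ᶜ := by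
      ext ω
      simp only [hS, mem_setOf_eq, mem_inter_iff, mem_compl_iff]
      by_cases hc : τ n ω ≤ T k ω
      · simp [hc, (ENNReal.coe_lt_top (r := t)).not_ge]
      · simp [hc]
    rw [heq]
    exact (hCS.stopping k t).inter (aux_le_stopping ℱ (hCS.stopping k) (hτst n) t).compl
  have hSmono : ∀ ω, Monotone fun k => S k ω := by
    intro ω j k hjk
    simp only [hS]
    split_ifs with h1 h2 h2
    · exact le_rfl
    · exact absurd (h1.trans (hCS.mono ω hjk)) h2
    · exact le_top
    · exact hCS.mono ω hjk
  have hSsup : ∀ ω, (⨆ k, S k ω) = ∞ := by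
    intro ω
    by_cases hex : ∃ k, τ n ω ≤ T k ω
    · obtain ⟨k, hk⟩ := hex
      refine top_unique ?_
      calc (∞ : ℝ≥0∞) = S k ω := by simp [hS, hk]
        _ ≤ ⨆ j, S j ω := le_iSup (fun j => S j ω) k
    · push_neg at hex
      -- then τ n ω = ∞
      have hτtop : τ n ω = ∞ := by
        by_contra hne
        have hmem : (ω, (τ n ω).toNNReal) ∈ B := hIccB n (by
          simp only [Icc0, mem_setOf_eq, ENNReal.coe_toNNReal hne]; exact le_rfl)
        obtain ⟨k, hk⟩ := mem_iUnion.mp (hCS.covers hmem)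
        have : τ n ω ≤ T k ω := by
          simp only [Icc0, mem_setOf_eq] at hk
          rwa [ENNReal.coe_toNNReal hne] at hk
        exact absurd this (hex k).not_ge
      have hSeq : ∀ k, S k ω = T k ω := fun k => if_neg (hex k).not_ge
      have : (⨆ k, S k ω) = debut B ω := by
        simp only [hSeq]; exact hCS.sup_eq ω
      rw [this]
      refine top_unique ?_
      calc (∞ : ℝ≥0∞) = τ n ω := hτtop.symm
        _ ≤ ⨆ k, τ k ω := le_iSup (fun k => τ k ω) n
        _ = debut B ω := hsup ω
  -- key identity: `(X^{τ n})^{S k} = ((Y k)^{S k})^{τ n}`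
  have hkey : ∀ k, stopped (stopped X (τ n)) (S k) = stopped (stopped (Y k) (S k)) (τ n) := by
    intro k
    funext ω t
    have hfin1 : min (S k ω) ((t : ℝ≥0) : ℝ≥0∞) ≠ ∞ :=
      ne_top_of_le_ne_top ENNReal.coe_ne_top (min_le_right _ _)
    have hfin2 : min (τ n ω) ((t : ℝ≥0) : ℝ≥0∞) ≠ ∞ :=
      ne_top_of_le_ne_top ENNReal.coe_ne_top (min_le_right _ _)
    simp only [stopped]
    rw [ENNReal.coe_toNNReal hfin1, ENNReal.coe_toNNReal hfin2,
      min_left_comm (S k ω) (τ n ω) ((t : ℝ≥0) : ℝ≥0∞)]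
    set r := (min (τ n ω) (min (S k ω) ((t : ℝ≥0) : ℝ≥0∞))).toNNReal with hr
    have hrfin : min (τ n ω) (min (S k ω) ((t : ℝ≥0) : ℝ≥0∞)) ≠ ∞ :=
      ne_top_of_le_ne_top hfin1 (min_le_right _ _)
    have hrcoe : ((r : ℝ≥0) : ℝ≥0∞) = min (τ n ω) (min (S k ω) ((t : ℝ≥0) : ℝ≥0∞)) :=
      ENNReal.coe_toNNReal hrfin
    have hrτ : ((r : ℝ≥0) : ℝ≥0∞) ≤ τ n ω := by rw [hrcoe]; exact min_le_left _ _
    have hrT : ((r : ℝ≥0) : ℝ≥0∞) ≤ T k ω := by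
      by_cases hc : τ n ω ≤ T k ω
      · exact hrτ.trans hc
      · have hSeq : S k ω = T k ω := if_neg hc
        rw [hrcoe]
        exact le_trans (le_trans (min_le_right _ _) (min_le_left _ _)) hSeq.le
    exact hCS.agrees k ω r (hIccB n hrτ) hrT
  -- the stopped processes of the coupled sequence, doubly stopped, lie in `𝒟`
  have hZmem : ∀ k, stopped (stopped (Y k) (S k)) (τ n) ∈ 𝒟 := fun k =>
    hDs _ (hDs _ (hY k) _ (hSst k)) _ (hτst n)
  -- initial values
  have hZ0 : ∀ k ω, stopped (stopped (Y k) (S k)) (τ n) ω 0 = X ω 0 := by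
    intro k ω
    simp [stopped, hXY0 k ω]
  -- conclude via localization
  rw [← hDl]
  refine ⟨?_, S, ⟨hSst, hSmono, hSsup⟩, fun k => ?_⟩
  · have hfun : (fun ω => stopped X (τ n) ω 0) = fun ω => Y 0 ω 0 := by
      funext ω
      simp [stopped, hXY0 0 ω]
    rw [hfun]
    have hY0 := hY 0
    rw [← hDl] at hY0
    exact hY0.1
  · have hfun : (fun ω t => stopped (stopped X (τ n)) (S k) ω t - stopped X (τ n) ω 0) =
        fun ω t => stopped (stopped (Y k) (S k)) (τ n) ω t -
          stopped (stopped (Y k) (S k)) (τ n) ω 0 := by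
      funext ω t
      rw [hkey k, hZ0 k ω]
      simp [stopped]
    rw [hfun]
    exact aux_sub_initial hDl (hZmem k)

end
end

section
/- Let B be a PSIT and X a process on B with a coupled sequence (T_n, X^{(n)}); set T₀ = 0. Then X coincides, as a process on B (up to indistinguishability on B), with the restriction to B of the process X₀·1_{Ω×{0}} + Σ_{n≥1} X^{(n)}·1_{(T_{n-1},T_n]}, where (T_{n-1},T_n] = {(ω,t) : T_{n-1}(ω) < t ≤ T_n(ω)}. Moreover this expression is independent of the coupled sequence: if (S_n, X̃^{(n)}) is another coupled sequence for X (with S₀ = 0), then the restriction to B of X₀·1_{Ω×{0}} + Σ_{n≥1} X̃^{(n)}·1_{(S_{n-1},S_n]} also equals X on B. -/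
/-!
Common framework: stochastic processes on predictable sets of interval type (PSITs),
following Yue–Wang–Huang, "Stochastic Integrals on Predictable Sets of Interval Type
with Financial Applications".

Time index: `ℝ≥0`.  Stopping times take values in `ℝ≥0∞`.
A process is a map `Ω → ℝ≥0 → ℝ`.
-/

open MeasureTheory Set Filter Function
open scoped NNReal ENNReal Topology

noncomputable section

attribute [local instance] Classical.propDecidable

variable {Ω : Type*} [m : MeasurableSpace Ω]

/-- Auxiliary: pointwise agreement of `X` with the patched process on `B`. -/
theorem patch_eq_aux {ℱ : Filtration ℝ≥0 m} {B : Set (Ω × ℝ≥0)} {X : Ω → ℝ≥0 → ℝ}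
    {T : ℕ → Ω → ℝ≥0∞} {Y : ℕ → Ω → ℝ≥0 → ℝ} (hCS : IsCS ℱ B X T Y)
    (ω : Ω) (t : ℝ≥0) (hmem : (ω, t) ∈ B) :
    X ω t = patch T Y (fun ω => X ω 0) ω t := by
  unfold patch
  by_cases ht : t = 0
  · simp [ht]
  · rw [if_neg ht]
    have hcov : ∃ n, (t : ℝ≥0∞) ≤ T n ω := by
      have := hCS.covers hmem
      simpa [Icc0, mem_iUnion] using this
    have hn₀ : (t : ℝ≥0∞) ≤ T (Nat.find hcov) ω := Nat.find_spec hcov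
    rw [tsum_eq_single (Nat.find hcov)]
    · rw [if_pos]
      · exact hCS.agrees _ ω t hmem hn₀
      · refine ⟨?_, hn₀⟩
        split_ifs with h0
        · exact ENNReal.coe_pos.mpr (pos_iff_ne_zero.mpr ht)
        · exact not_le.mp (Nat.find_min hcov (Nat.sub_lt (Nat.pos_of_ne_zero h0) one_pos))
    · intro n hn
      rw [if_neg]
      rintro ⟨h1, h2⟩
      rcases lt_or_gt_of_ne hn with h | h
      · exact Nat.find_min hcov h h2
      · have hle : (t : ℝ≥0∞) ≤ T (n - 1) ω :=
          hn₀.trans (hCS.mono ω (Nat.le_sub_one_of_lt h))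
        split_ifs at h1 with h0
        · omega
        · exact absurd h1 (not_lt.mpr hle)

/-- A process `X` on a PSIT `B` with coupled sequence `(T n, Y n)`
coincides on `B` (up to indistinguishability on `B`) with the restriction to `B` of
`X₀·1_{Ω×{0}} + Σ_n (Y n)·1_{(T (n-1), T n]}`, and this expression is independent of
the chosen coupled sequence. -/
theorem statement8 (ℙ : Measure Ω) [IsProbabilityMeasure ℙ] (ℱ : Filtration ℝ≥0 m)
    (hUC : UsualConditions ℙ ℱ) (B : Set (Ω × ℝ≥0)) (hB : IsPSIT ℱ B)
    (X : Ω → ℝ≥0 → ℝ) (hX : IsProcessOn B X)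
    (T : ℕ → Ω → ℝ≥0∞) (Y : ℕ → Ω → ℝ≥0 → ℝ) (hCS : IsCS ℱ B X T Y) :
    IndistOn ℙ B X (patch T Y fun ω => X ω 0) ∧
      ∀ (S : ℕ → Ω → ℝ≥0∞) (Z : ℕ → Ω → ℝ≥0 → ℝ), IsCS ℱ B X S Z →
        IndistOn ℙ B X (patch S Z fun ω => X ω 0) := by
  exact ⟨ae_of_all _ fun ω t hmem => patch_eq_aux hCS ω t hmem,
    fun S Z hCS' => ae_of_all _ fun ω t hmem => patch_eq_aux hCS' ω t hmem⟩

end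
end

section
/- Let B be a PSIT and X a process on B admitting a coupled sequence (T_n, X^{(n)}) such that, for every n, every path of X^{(n)} has finite left-hand limits on (0,∞). Then for every (ω,t) ∈ B with t > 0 the left limit X(ω,t−) = lim_{s↑t, s<t} X(ω,s) exists; and the left-limit process X₋ on B, defined by X₋(ω,0) = X(ω,0) and X₋(ω,t) = X(ω,t−) for (ω,t) ∈ B with t > 0, admits (T_n, (X^{(n)})₋) as a coupled sequence, where (X^{(n)})₋ is the ordinary left-limit process (with the convention (X^{(n)})₋(ω,0) = X^{(n)}(ω,0)). -/
/-!
Common framework: stochastic processes on predictable sets of interval type (PSITs),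
following Yue–Wang–Huang, "Stochastic Integrals on Predictable Sets of Interval Type
with Financial Applications".

Time index: `ℝ≥0`.  Stopping times take values in `ℝ≥0∞`.
A process is a map `Ω → ℝ≥0 → ℝ`.
-/

open MeasureTheory Set Filter Function
open scoped NNReal ENNReal Topology

noncomputable section

attribute [local instance] Classical.propDecidable

variable {Ω : Type*} [m : MeasurableSpace Ω]

theorem leftLimFn_congr_of_eqOn_Iic {f g : ℝ≥0 → ℝ} {t : ℝ≥0} (h : EqOn f g (Iic t)) :
    leftLimFn f t = leftLimFn g t := by
  unfold leftLimFn
  split_ifs with ht0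
  · exact h (zero_le : 0 ≤ t)
  · rw [limUnder, limUnder,
      Filter.map_congr ((h.mono Iio_subset_Iic_self).eventuallyEq_nhdsWithin)]

theorem IsIntervalType.mem_of_le {α : Type*} {B : Set (α × ℝ≥0)} (hB : IsIntervalType B)
    {ω : α} {s t : ℝ≥0} (ht : (ω, t) ∈ B) (hst : s ≤ t) : (ω, s) ∈ B := by
  obtain ⟨-, S, hS | hS⟩ := hB ω <;> have hS := Set.ext_iff.1 hS
  · exact (hS s).2 ((ENNReal.coe_le_coe.2 hst).trans_lt ((hS t).1 ht))
  · exact (hS s).2 ((ENNReal.coe_le_coe.2 hst).trans ((hS t).1 ht))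

namespace IsCS

variable {ℱ : Filtration ℝ≥0 m} {B : Set (Ω × ℝ≥0)} {X : Ω → ℝ≥0 → ℝ}
  {T : ℕ → Ω → ℝ≥0∞} {Y : ℕ → Ω → ℝ≥0 → ℝ}

theorem eqOn_Iic (hCS : IsCS ℱ B X T Y) (hB : IsIntervalType B) {n : ℕ} {ω : Ω} {t : ℝ≥0}
    (ht : (ω, t) ∈ B) (htT : (t : ℝ≥0∞) ≤ T n ω) : EqOn (X ω) (Y n ω) (Iic t) :=
  fun _ hs => hCS.agrees n ω _ (hB.mem_of_le ht hs) ((ENNReal.coe_le_coe.2 hs).trans htT)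

theorem exists_tendsto_nhdsLT (hCS : IsCS ℱ B X T Y) (hB : IsIntervalType B)
    {ω : Ω} {t : ℝ≥0} (ht : (ω, t) ∈ B)
    (hlim : ∀ n, ∃ l : ℝ, Tendsto (Y n ω) (𝓝[<] t) (𝓝 l)) :
    ∃ l : ℝ, Tendsto (X ω) (𝓝[<] t) (𝓝 l) := by
  obtain ⟨n, hn⟩ := mem_iUnion.1 (hCS.covers ht)
  obtain ⟨l, hl⟩ := hlim n
  exact ⟨l, hl.congr' ((hCS.eqOn_Iic hB ht hn).symm.mono
    Iio_subset_Iic_self).eventuallyEq_nhdsWithin⟩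

theorem leftLimProc (hCS : IsCS ℱ B X T Y) (hB : IsIntervalType B) :
    IsCS ℱ B (leftLimProc X) T fun n => leftLimProc (Y n) where
  stopping := hCS.stopping
  mono := hCS.mono
  sup_eq := hCS.sup_eq
  covers := hCS.covers
  agrees _ _ _ ht htT := leftLimFn_congr_of_eqOn_Iic (hCS.eqOn_Iic hB ht htT)

end IsCS

theorem statement9_general (ℱ : Filtration ℝ≥0 m)
    (B : Set (Ω × ℝ≥0)) (hB : IsPSIT ℱ B)
    (X : Ω → ℝ≥0 → ℝ)
    (T : ℕ → Ω → ℝ≥0∞) (Y : ℕ → Ω → ℝ≥0 → ℝ) (hCS : IsCS ℱ B X T Y)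
    (hlim : ∀ (n : ℕ) (ω : Ω) (t : ℝ≥0), 0 < t →
      ∃ l : ℝ, Tendsto (Y n ω) (𝓝[<] t) (𝓝 l)) :
    (∀ (ω : Ω) (t : ℝ≥0), (ω, t) ∈ B → 0 < t →
        ∃ l : ℝ, Tendsto (X ω) (𝓝[<] t) (𝓝 l)) ∧
      IsCS ℱ B (leftLimProc X) T fun n => leftLimProc (Y n) :=
  ⟨fun _ _ ht ht0 => hCS.exists_tendsto_nhdsLT hB.1 ht fun n => hlim n _ _ ht0,
    hCS.leftLimProc hB.1⟩

/-- If `X` is a process on `B` with a coupled sequence `(T n, Y n)` in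
which every path of every `Y n` has finite left limits on `(0,∞)`, then for every
`(ω, t) ∈ B` with `t > 0` the left limit of `X (ω, ·)` at `t` exists, and
`(T n, (Y n)₋)` is a coupled sequence for the left-limit process `X₋` on `B`. -/
theorem statement9 (ℙ : Measure Ω) [IsProbabilityMeasure ℙ] (ℱ : Filtration ℝ≥0 m)
    (hUC : UsualConditions ℙ ℱ) (B : Set (Ω × ℝ≥0)) (hB : IsPSIT ℱ B)
    (X : Ω → ℝ≥0 → ℝ) (hX : IsProcessOn B X)
    (T : ℕ → Ω → ℝ≥0∞) (Y : ℕ → Ω → ℝ≥0 → ℝ) (hCS : IsCS ℱ B X T Y)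
    (hlim : ∀ (n : ℕ) (ω : Ω) (t : ℝ≥0), 0 < t →
      ∃ l : ℝ, Tendsto (Y n ω) (𝓝[<] t) (𝓝 l)) :
    (∀ (ω : Ω) (t : ℝ≥0), (ω, t) ∈ B → 0 < t →
        ∃ l : ℝ, Tendsto (X ω) (𝓝[<] t) (𝓝 l)) ∧
      IsCS ℱ B (leftLimProc X) T fun n => leftLimProc (Y n) :=
  statement9_general ℱ B hB X T Y hCS hlim

end
end
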